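/- Soundness of axiom BP: if every transition of nondeterministic process E can be matched by an (optional) transition of probabilistic process P with branching probabilistically bisimilar target (E ⊑ P), then ∂(E + τ.P) ≈_b P, and consequently α.(∂(E + τ.P) ⊕_r Q) ≈_rb α.(P ⊕_r Q). -/

import Mathlib

/-!
Extend `≈_b` by the pair `(δ(E + τ.P), ⟦P⟧)` and its converse; the result is a branching
probabilistic bisimulation. A decomposition of `δ(E + τ.P)` consists of copies of itself; every
move of `⟦P⟧` is answered by first taking the `τ`-step `E + τ.P → ⟦P⟧`; and every transition of
`δ(E + τ.P)` combines transitions of `E + τ.P`, each matched (by `E ⊑ P`, or trivially for the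
`τ.P` summand) by an optional transition of `⟦P⟧`. Gluing these matches together needs that
`≈_b` is closed under convex combinations, which holds because the convex closure of `≈_b` is again
a branching bisimulation: two decompositions of one distribution always have a common refinement,
so transitions and decompositions can be pushed through convex combinations.

For the rooted claim, the identity together with the pair `α.(∂(E + τ.P) ⊕_r Q)`,
`α.(P ⊕_r Q)` is a rooted branching bisimulation: the only transitions are the `α`-steps to the
two mixtures, and these are `≈_b`-related by convexity.
-/

open scoped BigOperators
open Classical

namespace PBB

structure Distr (X : Type) where
  f : X → ℝ
  nonneg : ∀ x, 0 ≤ f x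
  fin : (Function.support f).Finite
  sum_one : ∑ᶠ x, f x = 1

namespace Distr

variable {X : Type}

noncomputable def dirac (E : X) : Distr X where
  f := fun x => if x = E then 1 else 0
  nonneg := fun x => by by_cases h : x = E <;> simp [h]
  fin := Set.Finite.subset (Set.finite_singleton E) (by
    intro x hx
    simp only [Function.mem_support] at hx
    by_contra h
    simp only [Set.mem_singleton_iff] at h
    simp [h] at hx)
  sum_one := by
    rw [finsum_eq_single _ E (by intro x hx; simp [hx])]
    simp

noncomputable def mix (r : ℝ) (h0 : 0 ≤ r) (h1 : r ≤ 1) (μ ν : Distr X) : Distr X where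
  f := fun x => r * μ.f x + (1 - r) * ν.f x
  nonneg := fun x =>
    add_nonneg (mul_nonneg h0 (μ.nonneg x)) (mul_nonneg (by linarith) (ν.nonneg x))
  fin := Set.Finite.subset (μ.fin.union ν.fin) (by
    intro x hx
    simp only [Function.mem_support] at hx
    by_contra h
    simp only [Set.mem_union, Function.mem_support, not_or, not_not] at h
    simp [h.1, h.2] at hx)
  sum_one := by
    have hf : (Function.support fun x => r * μ.f x).Finite :=
      Set.Finite.subset μ.fin (by
        intro x hx
        simp only [Function.mem_support] at hx ⊢
        intro h; simp [h] at hx)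
    have hg : (Function.support fun x => (1 - r) * ν.f x).Finite :=
      Set.Finite.subset ν.fin (by
        intro x hx
        simp only [Function.mem_support] at hx ⊢
        intro h; simp [h] at hx)
    rw [finsum_add_distrib hf hg, ← mul_finsum _ _, ← mul_finsum _ _,
      μ.sum_one, ν.sum_one]
    ring

end Distr

def IsMix {X : Type} (r : ℝ) (μ ν ξ : Distr X) : Prop :=
  ∀ x, ξ.f x = r * μ.f x + (1 - r) * ν.f x

def IsCombo {X I : Type} [Fintype I] (p : I → ℝ) (μs : I → Distr X) (ξ : Distr X) : Prop :=
  (∀ i, 0 ≤ p i) ∧ (∑ i, p i = 1) ∧ ∀ x, ξ.f x = ∑ i, p i * (μs i).f x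

/-! ### The probabilistic process calculus -/

mutual
/-- Non-deterministic processes: `E ::= 0 | α.P | E + E`. -/
inductive PE (Act : Type) : Type where
  | zero : PE Act
  | pre : Act → PP Act → PE Act
  | plus : PE Act → PE Act → PE Act

/-- Probabilistic processes: `P ::= ∂(E) | P ⊕_r P` with `r ∈ (0,1)`. -/
inductive PP (Act : Type) : Type where
  | dirac : PE Act → PP Act
  | pchoice : PP Act → (r : ℝ) → 0 < r → r < 1 → PP Act → PP Act
end

variable {Act : Type}

/-- The distribution `⟦P⟧` denoted by a probabilistic process. -/
noncomputable def den : PP Act → Distr (PE Act)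
  | .dirac E => Distr.dirac E
  | .pchoice P r h0 h1 Q => Distr.mix r h0.le h1.le (den P) (den Q)

/-- The transition relation `E →α μ` on non-deterministic processes. -/
inductive pstep : PE Act → Act → Distr (PE Act) → Prop where
  | pre (α : Act) (P : PP Act) : pstep (.pre α P) α (den P)
  | left {E₁ E₂ : PE Act} {α : Act} {μ : Distr (PE Act)} :
      pstep E₁ α μ → pstep (.plus E₁ E₂) α μ
  | right {E₁ E₂ : PE Act} {α : Act} {μ : Distr (PE Act)} :
      pstep E₂ α μ → pstep (.plus E₁ E₂) α μ

/-- The (combined) transition relation `μ →α μ'` on distributions. -/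
def dstep (μ : Distr (PE Act)) (α : Act) (μ' : Distr (PE Act)) : Prop :=
  ∃ (I : Type) (_ : Fintype I) (p : I → ℝ) (Es : I → PE Act) (μs : I → Distr (PE Act)),
    IsCombo p (fun i => Distr.dirac (Es i)) μ ∧ IsCombo p μs μ' ∧
    ∀ i, pstep (Es i) α (μs i)

variable (τ : Act)

/-- The partial silent step `μ →(τ) μ'`. -/
def ptau (μ μ' : Distr (PE Act)) : Prop :=
  dstep μ τ μ' ∨
  ∃ (s : ℝ) (μ₁ μ₂ μ₁' : Distr (PE Act)), 0 ≤ s ∧ s ≤ 1 ∧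
    IsMix s μ₁ μ₂ μ ∧ IsMix s μ₁' μ₂ μ' ∧ dstep μ₁ τ μ₁'

/-- `μ ⟹ μ'`: the reflexive-transitive closure of `→(τ)`. -/
def wtau : Distr (PE Act) → Distr (PE Act) → Prop :=
  Relation.ReflTransGen (ptau τ)

/-- The optional step `μ →(α) μ'`. -/
def optStep (μ : Distr (PE Act)) (α : Act) (μ' : Distr (PE Act)) : Prop :=
  dstep μ α μ' ∨ (α = τ ∧ ptau τ μ μ')

/-- Weak decomposability of a relation on distributions. -/
def WeaklyDecomposable (R : Distr (PE Act) → Distr (PE Act) → Prop) : Prop :=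
  ∀ (I : Type) (_ : Fintype I) (p : I → ℝ) (μs : I → Distr (PE Act))
    (μ ν : Distr (PE Act)),
    R μ ν → IsCombo p μs μ →
    ∃ (ν' : Distr (PE Act)) (νs : I → Distr (PE Act)),
      wtau τ ν ν' ∧ R μ ν' ∧ IsCombo p νs ν' ∧ ∀ i, R (μs i) (νs i)

/-- Decomposability of a relation on distributions. -/
def Decomposable (R : Distr (PE Act) → Distr (PE Act) → Prop) : Prop :=
  ∀ (I : Type) (_ : Fintype I) (p : I → ℝ) (μs : I → Distr (PE Act))
    (μ ν : Distr (PE Act)),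
    R μ ν → IsCombo p μs μ →
    ∃ νs : I → Distr (PE Act), IsCombo p νs ν ∧ ∀ i, R (μs i) (νs i)

/-- Branching probabilistic bisimulation relations. -/
def IsBranchingBisim (R : Distr (PE Act) → Distr (PE Act) → Prop) : Prop :=
  Symmetric R ∧ WeaklyDecomposable τ R ∧
  ∀ μ ν α μ', R μ ν → dstep μ α μ' →
    ∃ ν' ν'', wtau τ ν ν' ∧ optStep τ ν' α ν'' ∧ R μ ν' ∧ R μ' ν''

/-- Branching probabilistic bisimilarity `≈_b`. -/
def bb (μ ν : Distr (PE Act)) : Prop :=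
  ∃ R, IsBranchingBisim τ R ∧ R μ ν

/-- Strong probabilistic bisimulation relations. -/
def IsStrongBisim (R : Distr (PE Act) → Distr (PE Act) → Prop) : Prop :=
  Symmetric R ∧ Decomposable R ∧
  ∀ μ ν α μ', R μ ν → dstep μ α μ' →
    ∃ ν', dstep ν α ν' ∧ R μ' ν'

/-- Strong probabilistic bisimilarity `∼`. -/
def sb (μ ν : Distr (PE Act)) : Prop :=
  ∃ R, IsStrongBisim R ∧ R μ ν

/-- Rooted branching probabilistic bisimulation relations. -/
def IsRootedBranchingBisim (R : Distr (PE Act) → Distr (PE Act) → Prop) : Prop :=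
  Symmetric R ∧ Decomposable R ∧
  ∀ μ ν α μ', R μ ν → dstep μ α μ' →
    ∃ ν', dstep ν α ν' ∧ bb τ μ' ν'

/-- Rooted branching probabilistic bisimilarity `≈_rb`. -/
def rbb (μ ν : Distr (PE Act)) : Prop :=
  ∃ R, IsRootedBranchingBisim τ R ∧ R μ ν

/-- `≈_b`-stability of a distribution. -/
def Stable (μ : Distr (PE Act)) : Prop :=
  ∀ μ', wtau τ μ μ' → bb τ μ μ' → μ' = μ

/-- A state is rigid iff it admits no inert `τ`-transition. -/
def Rigid (E : PE Act) : Prop :=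
  ¬ ∃ μ, pstep E τ μ ∧ bb τ (Distr.dirac E) μ

/-- `E ⊑ P`: every transition of `E` is matched by an optional transition of `⟦P⟧`
with branching probabilistically bisimilar target. -/
def sq (E : PE Act) (P : PP Act) : Prop :=
  ∀ α μ, pstep E α μ → ∃ ν, optStep τ (den P) α ν ∧ bb τ μ ν

namespace Distr

variable {X : Type}

@[ext] theorem ext {μ ν : Distr X} (h : ∀ x, μ.f x = ν.f x) : μ = ν := by
  cases μ; cases ν; simp only [mk.injEq]; exact funext h

@[simp] theorem dirac_f (E x : X) : (dirac E).f x = if x = E then 1 else 0 := rfl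

theorem dirac_injective : Function.Injective (dirac : X → Distr X) := by
  intro a b h
  simpa using congrArg (fun d : Distr X => d.f a) h

theorem eq_dirac_of_forall_ne {μ : Distr X} {E : X} (h : ∀ x, x ≠ E → μ.f x = 0) :
    μ = dirac E := by
  have hE : μ.f E = 1 := by rw [← μ.sum_one, finsum_eq_single _ E h]
  ext x
  by_cases hx : x = E <;> simp [hx, hE, h]

theorem exists_finsum_mul_eq [Nonempty (Distr X)] {g : X → ℝ} (hg : ∀ x, 0 ≤ g x)
    (hfin : (Function.support g).Finite) :
    ∃ ξ : Distr X, ∀ x, (∑ᶠ y, g y) * ξ.f x = g x := by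
  by_cases hs : ∑ᶠ y, g y = 0
  · refine ⟨Classical.arbitrary _, fun x => ?_⟩
    rw [hs, zero_mul]
    exact (le_antisymm ((single_le_finsum x hfin hg).trans hs.le) (hg x)).symm
  · refine ⟨⟨fun x => g x / ∑ᶠ y, g y, fun x => div_nonneg (hg x) (finsum_nonneg hg),
      hfin.subset fun x hx h0 => hx (by simp [h0]), ?_⟩, fun x => mul_div_cancel₀ _ hs⟩
    simp_rw [div_eq_mul_inv]
    rw [← finsum_mul, mul_inv_cancel₀ hs]

section Combination

variable {I : Type} [Fintype I]

noncomputable def combo (p : I → ℝ) (hp : ∀ i, 0 ≤ p i) (h1 : ∑ i, p i = 1)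
    (σ : I → Distr X) : Distr X where
  f x := ∑ i, p i * (σ i).f x
  nonneg x := Finset.sum_nonneg fun i _ => mul_nonneg (hp i) ((σ i).nonneg x)
  fin := (Set.finite_iUnion fun i => (σ i).fin).subset fun x hx => by
    by_contra h
    simp only [Set.mem_iUnion, Function.mem_support, not_exists, not_not] at h
    exact hx (by simp [h])
  sum_one := by
    rw [finsum_sum_comm _ _ fun i _ => (σ i).fin.subset fun x hx h0 => hx (by simp [h0])]
    simp_rw [← mul_finsum, sum_one, mul_one]
    exact h1

theorem exists_mul_eq_sum [Nonempty (Distr X)] {t : I → ℝ} (ht : ∀ i, 0 ≤ t i)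
    (η : I → Distr X) : ∃ ν : Distr X, ∀ x, (∑ i, t i) * ν.f x = ∑ i, t i * (η i).f x := by
  by_cases hw : ∑ i, t i = 0
  · have ht0 := (Finset.sum_eq_zero_iff_of_nonneg fun i _ => ht i).1 hw
    exact ⟨Classical.arbitrary _, fun x => by simp [ht0]⟩
  · refine ⟨combo (fun i => t i / ∑ j, t j) (fun i => div_nonneg (ht i) (Finset.sum_nonneg
      fun j _ => ht j)) (by rw [← Finset.sum_div, div_self hw]) η, fun x => ?_⟩
    simp only [combo, Finset.mul_sum, ← mul_assoc, mul_div_cancel₀ _ hw]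

end Combination

end Distr

section Combination

variable {X I : Type} [Fintype I] {p : I → ℝ} {σ σ' : I → Distr X} {μ ν : Distr X} {E : X}

theorem isCombo_combo (hp : ∀ i, 0 ≤ p i) (h1 : ∑ i, p i = 1) (σ : I → Distr X) :
    IsCombo p σ (Distr.combo p hp h1 σ) :=
  ⟨hp, h1, fun _ => rfl⟩

theorem isCombo_mix (r : ℝ) (h0 : 0 ≤ r) (h1 : r ≤ 1) (μ ν : Distr X) :
    IsCombo (fun b : Bool => if b then r else 1 - r) (fun b => if b then μ else ν)
      (Distr.mix r h0 h1 μ ν) :=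
  ⟨fun b => by cases b <;> simp [h0, h1], by simp, fun x => by simp [Distr.mix]⟩

theorem IsCombo.unique (h : IsCombo p σ μ) (h' : IsCombo p σ ν) : μ = ν :=
  Distr.ext fun x => by rw [h.2.2, h'.2.2]

theorem IsCombo.const (hp : ∀ i, 0 ≤ p i) (h1 : ∑ i, p i = 1) (ν : Distr X) :
    IsCombo p (fun _ => ν) ν :=
  ⟨hp, h1, fun x => by rw [← Finset.sum_mul, h1, one_mul]⟩

theorem IsCombo.congr (h : IsCombo p σ μ) (hσ : ∀ i, p i ≠ 0 → σ i = σ' i) :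
    IsCombo p σ' μ := by
  refine ⟨h.1, h.2.1, fun x => (h.2.2 x).trans (Finset.sum_congr rfl fun i _ => ?_)⟩
  by_cases hi : p i = 0
  · simp [hi]
  · rw [hσ i hi]

theorem IsCombo.eq_of_forall (h : IsCombo p σ μ) (hσ : ∀ i, p i ≠ 0 → σ i = ν) : μ = ν :=
  (h.congr hσ).unique (IsCombo.const h.1 h.2.1 ν)

theorem IsCombo.exists_ne_zero (h : IsCombo p σ μ) : ∃ i, p i ≠ 0 := by
  by_contra! h0
  simpa [h0] using h.2.1

theorem IsCombo.le (h : IsCombo p σ μ) (i : I) (x : X) : p i * (σ i).f x ≤ μ.f x := by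
  rw [h.2.2 x]
  exact Finset.single_le_sum (fun j _ => mul_nonneg (h.1 j) ((σ j).nonneg x))
    (Finset.mem_univ i)

theorem IsCombo.mul_eq_zero_of_eq_zero (h : IsCombo p σ μ) {x : X} (hx : μ.f x = 0) (i : I) :
    p i * (σ i).f x = 0 :=
  le_antisymm (hx ▸ h.le i x) (mul_nonneg (h.1 i) ((σ i).nonneg x))

theorem IsCombo.eq_dirac (h : IsCombo p σ (Distr.dirac E)) {i : I} (hi : p i ≠ 0) :
    σ i = Distr.dirac E :=
  Distr.eq_dirac_of_forall_ne fun x hx =>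
    (mul_eq_zero.mp (h.mul_eq_zero_of_eq_zero (by simp [hx]) i)).resolve_left hi

theorem IsCombo.exists_rel_of_dirac {R : Distr X → Distr X → Prop} (hR : ∀ μ, R μ μ)
    (h : IsCombo p σ (Distr.dirac E)) (hE : R (Distr.dirac E) ν) :
    ∃ σ' : I → Distr X, IsCombo p σ' ν ∧ ∀ i, R (σ i) (σ' i) := by
  refine ⟨fun i => if p i = 0 then σ i else ν,
    (IsCombo.const h.1 h.2.1 ν).congr fun i hi => by simp [hi], fun i => ?_⟩
  by_cases hi : p i = 0
  · simpa [hi] using hR (σ i)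
  · simpa [hi, h.eq_dirac hi] using hE

theorem IsCombo.div {w : ℝ} {t : I → ℝ} (hw : w ≠ 0) (ht : ∀ i, 0 ≤ t i) (hsum : ∑ i, t i = w)
    (h : ∀ x, w * μ.f x = ∑ i, t i * (σ i).f x) : IsCombo (fun i => t i / w) σ μ := by
  have hw0 : 0 ≤ w := hsum ▸ Finset.sum_nonneg fun i _ => ht i
  refine ⟨fun i => div_nonneg (ht i) hw0, by rw [← Finset.sum_div, hsum, div_self hw],
    fun x => ?_⟩
  simp_rw [div_mul_eq_mul_div, ← Finset.sum_div, ← h x, mul_div_cancel_left₀ _ hw]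

theorem IsCombo.sigma {J : I → Type} [∀ i, Fintype (J i)] {q : ∀ i, J i → ℝ}
    {η : ∀ i, J i → Distr X} (h : IsCombo p σ μ) (hσ : ∀ i, IsCombo (q i) (η i) (σ i)) :
    IsCombo (fun x : Σ i, J i => p x.1 * q x.1 x.2) (fun x => η x.1 x.2) μ := by
  refine ⟨fun x => mul_nonneg (h.1 _) ((hσ _).1 _), ?_, fun y => ?_⟩
  · simp_rw [Fintype.sum_sigma, ← Finset.mul_sum, (hσ _).2.1, mul_one, h.2.1]
  · simp_rw [Fintype.sum_sigma, mul_assoc, ← Finset.mul_sum, ← (hσ _).2.2 y, h.2.2 y]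

theorem IsCombo.isMix_regroup {s : I → ℝ} {a b : I → Distr X} {A B : Distr X}
    (h : IsCombo p σ μ) (hσ : ∀ i, IsMix (s i) (a i) (b i) (σ i))
    (hA : ∀ x, (∑ i, p i * s i) * A.f x = ∑ i, p i * s i * (a i).f x)
    (hB : ∀ x, (1 - ∑ i, p i * s i) * B.f x = ∑ i, p i * (1 - s i) * (b i).f x) :
    IsMix (∑ i, p i * s i) A B μ := by
  intro x
  rw [hA x, hB x, h.2.2 x, ← Finset.sum_add_distrib]
  exact Finset.sum_congr rfl fun i _ => by rw [hσ i x]; ring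

theorem IsCombo.restrict (h : IsCombo p σ μ) :
    IsCombo (fun i : {i // p i ≠ 0} => p i) (fun i => σ i) μ := by
  have hsum : ∀ g : I → ℝ, (∀ i, p i = 0 → g i = 0) → ∑ i : {i // p i ≠ 0}, g i = ∑ i, g i :=
    fun g hg => by
      rw [← Finset.sum_subtype (Finset.univ.filter fun i => p i ≠ 0) (by simp) g]
      exact Finset.sum_filter_of_ne fun i _ hgi hpi => hgi (hg i hpi)
  refine ⟨fun i => h.1 i, by rw [hsum p fun _ => id, h.2.1], fun x => ?_⟩
  rw [h.2.2 x]
  exact (hsum _ fun i hi => by simp [hi]).symm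

end Combination

section Coupling

variable {X K J : Type} [Fintype K] [Fintype J] {w : K → ℝ} {σ : K → Distr X}
  {p : J → ℝ} {ρ : J → Distr X} {μ : Distr X}

theorem IsCombo.coupling (hσ : IsCombo w σ μ) (hρ : IsCombo p ρ μ) :
    ∃ (t : K → J → ℝ) (ξ : K → J → Distr X), (∀ k j, 0 ≤ t k j) ∧
      (∀ k, ∑ j, t k j = w k) ∧ (∀ j, ∑ k, t k j = p j) ∧
      (∀ k x, w k * (σ k).f x = ∑ j, t k j * (ξ k j).f x) ∧
      (∀ j x, p j * (ρ j).f x = ∑ k, t k j * (ξ k j).f x) := by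
  have : Nonempty (Distr X) := ⟨μ⟩
  -- the refinement is `t k j · ξ k j (x) = w k σ_k(x) · p j ρ_j(x) / μ(x)`
  set g : K → J → X → ℝ := fun k j x => w k * (σ k).f x * (p j * (ρ j).f x) / μ.f x
  have hg0 : ∀ k j x, 0 ≤ g k j x := fun k j x =>
    div_nonneg (mul_nonneg (mul_nonneg (hσ.1 k) ((σ k).nonneg x))
      (mul_nonneg (hρ.1 j) ((ρ j).nonneg x))) (μ.nonneg x)
  have hgfin : ∀ k j, (Function.support (g k j)).Finite := fun k j =>
    μ.fin.subset fun x hx h0 => hx (by simp [g, h0])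
  have hrow : ∀ k x, ∑ j, g k j x = w k * (σ k).f x := fun k x => by
    simp only [g]
    rw [← Finset.sum_div, ← Finset.mul_sum, ← hρ.2.2 x]
    exact mul_div_cancel_of_imp fun hx => hσ.mul_eq_zero_of_eq_zero hx k
  have hcol : ∀ j x, ∑ k, g k j x = p j * (ρ j).f x := fun j x => by
    simp only [g]
    rw [← Finset.sum_div, ← Finset.sum_mul, ← hσ.2.2 x]
    exact mul_div_cancel_left_of_imp fun hx => hρ.mul_eq_zero_of_eq_zero hx j
  choose ξ hξ using fun k j => Distr.exists_finsum_mul_eq (hg0 k j) (hgfin k j)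
  refine ⟨fun k j => ∑ᶠ x, g k j x, ξ, fun k j => finsum_nonneg (hg0 k j), fun k => ?_,
    fun j => ?_, fun k x => ?_, fun j x => ?_⟩
  · rw [← finsum_sum_comm _ _ fun j _ => hgfin k j, finsum_congr (hrow k), ← mul_finsum,
      Distr.sum_one, mul_one]
  · rw [← finsum_sum_comm _ _ fun k _ => hgfin k j, finsum_congr (hcol j), ← mul_finsum,
      Distr.sum_one, mul_one]
  · rw [← hrow]
    exact Finset.sum_congr rfl fun j _ => (hξ k j x).symm
  · rw [← hcol]
    exact Finset.sum_congr rfl fun k _ => (hξ k j x).symm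

end Coupling

def ConvexClosed {X : Type} (R : Distr X → Distr X → Prop) : Prop :=
  ∀ ⦃I : Type⦄ [Fintype I] ⦃p : I → ℝ⦄ ⦃σ σ' : I → Distr X⦄ ⦃μ μ' : Distr X⦄,
    IsCombo p σ μ → IsCombo p σ' μ' → (∀ i, p i ≠ 0 → R (σ i) (σ' i)) → R μ μ'

section ConvexClosed

variable {X : Type} {R : Distr X → Distr X → Prop}

theorem convexClosed_of_forall
    (hR : ∀ (I : Type) [Fintype I] (p : I → ℝ) (σ σ' : I → Distr X) (μ μ' : Distr X),
      IsCombo p σ μ → IsCombo p σ' μ' → (∀ i, R (σ i) (σ' i)) → R μ μ') :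
    ConvexClosed R := by
  intro I _ p σ σ' μ μ' hc hc' h
  exact hR _ _ _ _ _ _ hc.restrict hc'.restrict fun i => h i i.2

theorem ConvexClosed.reflTransGen (hrefl : ∀ μ, R μ μ) (hR : ConvexClosed R) :
    ConvexClosed (Relation.ReflTransGen R) := by
  intro I _ p σ σ' μ μ' hc hc' h
  let mid (ρ : I → Distr X) : Distr X := Distr.combo p hc.1 hc.2.1 ρ
  have lift : ∀ (j : I) (ρ : I → Distr X) {c c' : Distr X}, Relation.ReflTransGen R c c' →
      Relation.ReflTransGen R (mid (Function.update ρ j c)) (mid (Function.update ρ j c')) := by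
    intro j ρ c c' hcc
    induction hcc with
    | refl => exact .refl
    | tail _ hstep ih =>
      refine ih.tail (hR (isCombo_combo _ _ _) (isCombo_combo _ _ _) fun i _ => ?_)
      by_cases hij : i = j
      · subst hij; simpa using hstep
      · simpa [hij] using hrefl (ρ i)
  -- move the components in `S` to their targets, one component at a time
  let swapped (S : Finset I) (i : I) : Distr X := if i ∈ S then σ' i else σ i
  have hS : ∀ S : Finset I, Relation.ReflTransGen R μ (mid (swapped S)) := by
    intro S
    induction S using Finset.induction_on with
    | empty => exact hc.unique (isCombo_combo _ _ _) ▸ .refl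
    | insert j S hj ih =>
      refine ih.trans ?_
      by_cases hpj : p j = 0
      · have heq : mid (swapped S) = mid (swapped (insert j S)) := by
          refine ((isCombo_combo hc.1 hc.2.1 _).congr fun i hi => ?_).unique (isCombo_combo _ _ _)
          have hij : i ≠ j := fun hij => hi (hij ▸ hpj)
          simp [swapped, hij]
        exact heq ▸ .refl
      · convert lift j (swapped S) (h j hpj) using 2 <;> funext i <;> by_cases hij : i = j <;>
          simp [swapped, hij, hj]
  simpa [mid, swapped, ← hc'.unique (isCombo_combo _ _ _)] using hS Finset.univ

end ConvexClosed

section Transitions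

variable {α : Act} {μ μ' : Distr (PE Act)}

theorem dstep_of_pstep {E : PE Act} (h : pstep E α μ) : dstep (Distr.dirac E) α μ :=
  ⟨Unit, inferInstance, fun _ => 1, fun _ => E, fun _ => μ,
    IsCombo.const (fun _ => zero_le_one) (by simp) _,
    IsCombo.const (fun _ => zero_le_one) (by simp) _, fun _ => h⟩

theorem exists_pstep_of_dstep_dirac {E : PE Act} (h : dstep (Distr.dirac E) α μ) :
    ∃ (I : Type) (_ : Fintype I) (q : I → ℝ) (ms : I → Distr (PE Act)),
      IsCombo q ms μ ∧ ∀ i, q i ≠ 0 → pstep E α (ms i) := by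
  obtain ⟨I, _, q, Es, ms, hEs, hms, hstep⟩ := h
  exact ⟨I, inferInstance, q, ms, hms,
    fun i hi => Distr.dirac_injective (hEs.eq_dirac hi) ▸ hstep i⟩

theorem pstep_pre_iff {β : Act} {P : PP Act} : pstep (.pre β P) α μ ↔ α = β ∧ μ = den P := by
  constructor
  · rintro ⟨⟩
    exact ⟨rfl, rfl⟩
  · rintro ⟨rfl, rfl⟩
    exact pstep.pre α P

theorem dstep_dirac_pre {β : Act} {P : PP Act} (h : dstep (Distr.dirac (.pre β P)) α μ) :
    α = β ∧ μ = den P := by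
  obtain ⟨I, _, q, ms, hms, hstep⟩ := exists_pstep_of_dstep_dirac h
  have hpre : ∀ i, q i ≠ 0 → α = β ∧ ms i = den P := fun i hi => pstep_pre_iff.1 (hstep i hi)
  obtain ⟨i, hi⟩ := hms.exists_ne_zero
  exact ⟨(hpre i hi).1, hms.eq_of_forall fun i hi => (hpre i hi).2⟩

variable (α) in
theorem convexClosed_dstep : ConvexClosed (fun μ μ' : Distr (PE Act) => dstep μ α μ') := by
  refine convexClosed_of_forall fun I _ p σ σ' μ μ' hc hc' h => ?_
  choose J _ q Es ms hEs hms hstep using h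
  exact ⟨_, inferInstance, _, _, _, hc.sigma hEs, hc'.sigma hms, fun x => hstep x.1 x.2⟩

theorem IsCombo.exists_dstep {K : Type} [Fintype K] {w : K → ℝ} {σ : K → Distr (PE Act)}
    (hσ : IsCombo w σ μ) (h : dstep μ α μ') :
    ∃ σ' : K → Distr (PE Act), IsCombo w σ' μ' ∧ ∀ k, w k ≠ 0 → dstep (σ k) α (σ' k) := by
  obtain ⟨J, _, q, Es, ms, hEs, hms, hstep⟩ := h
  obtain ⟨t, ξ, ht0, hrow, hcol, hξσ, hξE⟩ := hσ.coupling hEs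
  have : Nonempty (Distr (PE Act)) := ⟨μ⟩
  choose σ' hσ' using fun k => Distr.exists_mul_eq_sum (ht0 k) ms
  simp only [hrow] at hσ'
  refine ⟨σ', ⟨hσ.1, hσ.2.1, fun y => ?_⟩, fun k hk => ⟨J, inferInstance, fun j => t k j / w k,
    Es, ms, ?_, IsCombo.div hk (ht0 k) (hrow k) (hσ' k), hstep⟩⟩
  · simp_rw [hms.2.2 y, hσ', ← hcol, Finset.sum_mul]
    exact Finset.sum_comm
  · refine (IsCombo.div hk (ht0 k) (hrow k) (hξσ k)).congr fun j hj => ?_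
    have htj : t k j ≠ 0 := fun h0 => hj (by rw [h0, zero_div])
    have hqj : q j ≠ 0 := fun hq => htj <|
      (Finset.sum_eq_zero_iff_of_nonneg fun k _ => ht0 k j).1 (hcol j ▸ hq) k (Finset.mem_univ k)
    exact (IsCombo.div hqj (ht0 · j) (hcol j) (hξE j)).eq_dirac (div_ne_zero htj hqj)

end Transitions

section SilentSteps

variable {μ μ' : Distr (PE Act)}

theorem ptau_of_dstep (h : dstep μ τ μ') : ptau τ μ μ' := Or.inl h

/-- The idle part takes all the mass; `τ.∂(0)` merely supplies the required `τ`-transition. -/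
theorem ptau_refl (μ : Distr (PE Act)) : ptau τ μ μ :=
  Or.inr ⟨0, Distr.dirac (.pre τ (.dirac .zero)), μ, den (.dirac .zero), le_rfl, zero_le_one,
    fun x => by ring, fun x => by ring, dstep_of_pstep (pstep.pre τ _)⟩

theorem ptau.exists_isMix (h : ptau τ μ μ') :
    ∃ (s : ℝ) (a b a' : Distr (PE Act)), 0 ≤ s ∧ s ≤ 1 ∧
      IsMix s a b μ ∧ IsMix s a' b μ' ∧ dstep a τ a' := by
  rcases h with h | h
  · exact ⟨1, μ, μ, μ', zero_le_one, le_rfl, fun x => by ring, fun x => by ring, h⟩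
  · exact h

theorem convexClosed_ptau : ConvexClosed (ptau τ) := by
  refine convexClosed_of_forall fun I _ p σ σ' μ μ' hc hc' h => ?_
  choose s a b a' hs0 hs1 hm hm' hstep using fun i => (h i).exists_isMix
  have hps : ∀ i, 0 ≤ p i * s i := fun i => mul_nonneg (hc.1 i) (hs0 i)
  by_cases hu : ∑ i, p i * s i = 0
  · have hzero := (Finset.sum_eq_zero_iff_of_nonneg fun i _ => hps i).1 hu
    suffices μ' = μ from this ▸ ptau_refl τ μ
    ext x
    rw [hc'.2.2, hc.2.2]
    refine Finset.sum_congr rfl fun i hi => ?_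
    linear_combination (hm' i x - hm i x) * p i + ((a' i).f x - (a i).f x) * hzero i hi
  -- the moving parts regroup into `A →τ A'`, the idle parts into `B`
  have : Nonempty (Distr (PE Act)) := ⟨μ⟩
  obtain ⟨A, hA⟩ := Distr.exists_mul_eq_sum hps a
  obtain ⟨A', hA'⟩ := Distr.exists_mul_eq_sum hps a'
  obtain ⟨B, hB⟩ := Distr.exists_mul_eq_sum (fun i => mul_nonneg (hc.1 i) (sub_nonneg.2 (hs1 i))) b
  have hrest : ∑ i, p i * (1 - s i) = 1 - ∑ i, p i * s i := by
    simp only [mul_sub, mul_one, Finset.sum_sub_distrib, hc.2.1]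
  simp only [hrest] at hB
  refine Or.inr ⟨_, A, B, A', Finset.sum_nonneg fun i _ => hps i, ?_,
    hc.isMix_regroup hm hA hB, hc'.isMix_regroup hm' hA' hB,
    convexClosed_dstep τ (IsCombo.div hu hps rfl hA) (IsCombo.div hu hps rfl hA')
      fun i _ => hstep i⟩
  rw [← hc.2.1]
  exact Finset.sum_le_sum fun i _ => mul_le_of_le_one_right (hc.1 i) (hs1 i)

variable (α : Act) in
theorem convexClosed_optStep : ConvexClosed (fun μ μ' : Distr (PE Act) => optStep τ μ α μ') := by
  intro I _ p σ σ' μ μ' hc hc' h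
  by_cases hα : α = τ
  · subst hα
    exact Or.inr ⟨rfl, convexClosed_ptau α hc hc' fun i hi =>
      (h i hi).elim (ptau_of_dstep α) And.right⟩
  · exact Or.inl (convexClosed_dstep α hc hc' fun i hi => (h i hi).resolve_right fun h' => hα h'.1)

theorem convexClosed_wtau : ConvexClosed (wtau τ) :=
  (convexClosed_ptau τ).reflTransGen (ptau_refl τ)

end SilentSteps

section Bisimilarity

theorem isBranchingBisim_bb : IsBranchingBisim τ (bb τ) := by
  refine ⟨fun μ ν ⟨R, hR, h⟩ => ⟨R, hR, hR.1 h⟩, ?_, ?_⟩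
  · intro I _ p μs μ ν ⟨R, hR, h⟩ hc
    obtain ⟨ν', νs, hw, h', hc', hs⟩ := hR.2.1 I _ p μs μ ν h hc
    exact ⟨ν', νs, hw, ⟨R, hR, h'⟩, hc', fun i => ⟨R, hR, hs i⟩⟩
  · intro μ ν α μ' ⟨R, hR, h⟩ hd
    obtain ⟨ν', ν'', hw, ho, h₁, h₂⟩ := hR.2.2 μ ν α μ' h hd
    exact ⟨ν', ν'', hw, ho, ⟨R, hR, h₁⟩, ⟨R, hR, h₂⟩⟩

theorem bb_refl (μ : Distr (PE Act)) : bb τ μ μ := by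
  refine ⟨Eq, ⟨fun _ _ => Eq.symm, ?_, ?_⟩, rfl⟩
  · rintro I _ p μs μ _ rfl hc
    exact ⟨μ, μs, .refl, rfl, hc, fun _ => rfl⟩
  · rintro μ _ α μ' rfl hd
    exact ⟨μ, μ', .refl, Or.inl hd, rfl, rfl⟩

def convexClosure {X : Type} (R : Distr X → Distr X → Prop) (μ ν : Distr X) : Prop :=
  ∃ (I : Type) (_ : Fintype I) (q : I → ℝ) (σ ρ : I → Distr X),
    IsCombo q σ μ ∧ IsCombo q ρ ν ∧ ∀ i, q i ≠ 0 → R (σ i) (ρ i)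

section ConvexClosure

variable {τ} {R : Distr (PE Act) → Distr (PE Act) → Prop}

theorem convexClosure_of_rel {μ ν : Distr (PE Act)} (h : R μ ν) : convexClosure R μ ν :=
  ⟨Unit, inferInstance, fun _ => 1, fun _ => μ, fun _ => ν,
    IsCombo.const (fun _ => zero_le_one) (by simp) μ,
    IsCombo.const (fun _ => zero_le_one) (by simp) ν, fun _ _ => h⟩

theorem WeaklyDecomposable.convexClosure (hrefl : ∀ μ, R μ μ) (hR : WeaklyDecomposable τ R) :
    WeaklyDecomposable τ (convexClosure R) := by
  intro J _ p μs μ ν ⟨K, _, q, σ, ρ, hσ, hρ, hR'⟩ hμs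
  obtain ⟨t, ξ, ht0, hrow, hcol, hξσ, hξμ⟩ := hσ.coupling hμs
  have htq : ∀ k j, q k = 0 → t k j = 0 := fun k j hk =>
    (Finset.sum_eq_zero_iff_of_nonneg fun j _ => ht0 k j).1 (hk ▸ hrow k) j (Finset.mem_univ j)
  have htp : ∀ k j, p j = 0 → t k j = 0 := fun k j hj =>
    (Finset.sum_eq_zero_iff_of_nonneg fun k _ => ht0 k j).1 (hj ▸ hcol j) k (Finset.mem_univ k)
  have hk : ∀ k, ∃ (ρ' : Distr (PE Act)) (η : J → Distr (PE Act)), wtau τ (ρ k) ρ' ∧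
      (q k ≠ 0 → R (σ k) ρ') ∧ (∀ x, q k * ρ'.f x = ∑ j, t k j * (η j).f x) ∧
      ∀ j, t k j ≠ 0 → R (ξ k j) (η j) := by
    intro k
    by_cases hqk : q k = 0
    · exact ⟨ρ k, ξ k, .refl, absurd hqk, fun x => by simp [hqk, htq k _ hqk],
        fun j hj => absurd (htq k j hqk) hj⟩
    obtain ⟨ρ', η, hw, hRρ', hη, hRη⟩ :=
      hR J _ _ _ _ _ (hR' k hqk) (IsCombo.div hqk (ht0 k) (hrow k) (hξσ k))
    refine ⟨ρ', η, hw, fun _ => hRρ', fun x => ?_, fun j _ => hRη j⟩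
    simp only [hη.2.2 x, Finset.mul_sum, ← mul_assoc, mul_div_cancel₀ _ hqk]
  choose ρ' η hw hRρ' hη hRη using hk
  have : Nonempty (Distr (PE Act)) := ⟨μ⟩
  have hj : ∀ j, ∃ νj : Distr (PE Act), PBB.convexClosure R (μs j) νj ∧
      ∀ x, p j * νj.f x = ∑ k, t k j * (η k j).f x := by
    intro j
    by_cases hpj : p j = 0
    · exact ⟨μs j, convexClosure_of_rel (hrefl _), fun x => by simp [hpj, htp _ j hpj]⟩
    obtain ⟨νj, hνj⟩ := Distr.exists_mul_eq_sum (ht0 · j) (η · j)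
    rw [hcol] at hνj
    exact ⟨νj, ⟨K, inferInstance, _, _, _, IsCombo.div hpj (ht0 · j) (hcol j) (hξμ j),
      IsCombo.div hpj (ht0 · j) (hcol j) hνj,
      fun k hk => hRη k j fun h0 => hk (by rw [h0, zero_div])⟩, hνj⟩
  choose νs hRνs hνs using hj
  have hν' := isCombo_combo hρ.1 hρ.2.1 ρ'
  refine ⟨_, νs, convexClosed_wtau τ hρ hν' fun k _ => hw k, ⟨K, inferInstance, q, σ, ρ', hσ, hν',
    hRρ'⟩, ⟨hμs.1, hμs.2.1, fun x => ?_⟩, hRνs⟩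
  simp_rw [hν'.2.2 x, hη, hνs]
  exact Finset.sum_comm

theorem IsBranchingBisim.convexClosure (hrefl : ∀ μ, R μ μ) (hR : IsBranchingBisim τ R) :
    IsBranchingBisim τ (convexClosure R) := by
  refine ⟨fun μ ν ⟨K, _, q, σ, ρ, hσ, hρ, h⟩ => ⟨K, _, q, ρ, σ, hρ, hσ, fun k hk => hR.1 (h k hk)⟩,
    hR.2.1.convexClosure hrefl, ?_⟩
  intro μ ν α μ' ⟨K, _, q, σ, ρ, hσ, hρ, hR'⟩ hd
  obtain ⟨σ', hσ', hstep⟩ := hσ.exists_dstep hd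
  have hk : ∀ k, ∃ ρ' ρ'', wtau τ (ρ k) ρ' ∧
      (q k ≠ 0 → optStep τ ρ' α ρ'' ∧ R (σ k) ρ' ∧ R (σ' k) ρ'') := by
    intro k
    by_cases hqk : q k = 0
    · exact ⟨ρ k, ρ k, .refl, absurd hqk⟩
    obtain ⟨ρ', ρ'', hw, ho, h₁, h₂⟩ := hR.2.2 _ _ _ _ (hR' k hqk) (hstep k hqk)
    exact ⟨ρ', ρ'', hw, fun _ => ⟨ho, h₁, h₂⟩⟩
  choose ρ' ρ'' hw hρ' using hk
  have hν' := isCombo_combo hρ.1 hρ.2.1 ρ'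
  have hν'' := isCombo_combo hρ.1 hρ.2.1 ρ''
  exact ⟨_, _, convexClosed_wtau τ hρ hν' fun k _ => hw k,
    convexClosed_optStep τ α hν' hν'' fun k hk => (hρ' k hk).1,
    ⟨K, inferInstance, q, σ, ρ', hσ, hν', fun k hk => (hρ' k hk).2.1⟩,
    ⟨K, inferInstance, q, σ', ρ'', hσ', hν'', fun k hk => (hρ' k hk).2.2⟩⟩

end ConvexClosure

theorem convexClosed_bb : ConvexClosed (bb τ) := by
  intro I _ p σ σ' μ μ' hc hc' h
  exact ⟨_, (isBranchingBisim_bb τ).convexClosure (bb_refl τ),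
    I, inferInstance, p, σ, σ', hc, hc', h⟩

end Bisimilarity

def addPair {X : Type} (R : X → X → Prop) (a b : X) (x y : X) : Prop :=
  R x y ∨ (x = a ∧ y = b) ∨ (x = b ∧ y = a)

theorem addPair_symm {X : Type} {R : X → X → Prop} (hR : ∀ ⦃x y⦄, R x y → R y x) (a b : X) :
    ∀ ⦃x y⦄, addPair R a b x y → addPair R a b y x := by
  rintro x y (h | ⟨rfl, rfl⟩ | ⟨rfl, rfl⟩)
  exacts [Or.inl (hR h), Or.inr (Or.inr ⟨rfl, rfl⟩), Or.inr (Or.inl ⟨rfl, rfl⟩)]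

section AxiomBP

variable {τ} {E : PE Act} {P : PP Act}

theorem pstep_plus_iff {E₁ E₂ : PE Act} {α : Act} {μ : Distr (PE Act)} :
    pstep (.plus E₁ E₂) α μ ↔ pstep E₁ α μ ∨ pstep E₂ α μ := by
  constructor
  · rintro (_ | ⟨h⟩ | ⟨h⟩)
    exacts [Or.inl h, Or.inr h]
  · rintro (h | h)
    exacts [pstep.left h, pstep.right h]

theorem sq.exists_optStep (h : sq τ E P) {α : Act} {μ' : Distr (PE Act)}
    (hd : dstep (Distr.dirac (.plus E (.pre τ P))) α μ') :
    ∃ ζ, optStep τ (den P) α ζ ∧ bb τ μ' ζ := by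
  obtain ⟨I, _, q, ms, hms, hstep⟩ := exists_pstep_of_dstep_dirac hd
  have hi : ∀ i, ∃ ζ, q i ≠ 0 → optStep τ (den P) α ζ ∧ bb τ (ms i) ζ := by
    intro i
    by_cases hqi : q i = 0
    · exact ⟨den P, absurd hqi⟩
    rcases pstep_plus_iff.1 (hstep i hqi) with hE | hτ
    · obtain ⟨ζ, hζ⟩ := h α _ hE
      exact ⟨ζ, fun _ => hζ⟩
    · obtain ⟨rfl, hmi⟩ := pstep_pre_iff.1 hτ
      exact ⟨den P, fun _ => ⟨Or.inr ⟨rfl, ptau_refl α _⟩, hmi ▸ bb_refl α _⟩⟩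
  choose ζ hζ using hi
  have hc := isCombo_combo hms.1 hms.2.1 ζ
  exact ⟨_, convexClosed_optStep τ α (IsCombo.const hms.1 hms.2.1 _) hc fun i hi => (hζ i hi).1,
    convexClosed_bb τ hms hc fun i hi => (hζ i hi).2⟩

theorem isBranchingBisim_addPair (h : sq τ E P) :
    IsBranchingBisim τ (addPair (bb τ) (Distr.dirac (.plus E (.pre τ P))) (den P)) := by
  have hτ : wtau τ (Distr.dirac (.plus E (.pre τ P))) (den P) :=
    .single (ptau_of_dstep τ (dstep_of_pstep (pstep.right (pstep.pre τ P))))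
  obtain ⟨hsymm, hwd, htr⟩ := isBranchingBisim_bb τ
  refine ⟨addPair_symm hsymm _ _, ?_, ?_⟩
  · rintro I _ p μs μ ν (hbb | ⟨rfl, rfl⟩ | ⟨rfl, rfl⟩) hc
    · obtain ⟨ν', νs, hw, h', hc', hs⟩ := hwd I _ p μs μ ν hbb hc
      exact ⟨ν', νs, hw, Or.inl h', hc', fun i => Or.inl (hs i)⟩
    · obtain ⟨νs, hc', hs⟩ := hc.exists_rel_of_dirac (R := addPair (bb τ) _ _)
        (fun μ => Or.inl (bb_refl τ μ)) (Or.inr (Or.inl ⟨rfl, rfl⟩))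
      exact ⟨den P, νs, .refl, Or.inr (Or.inl ⟨rfl, rfl⟩), hc', hs⟩
    · exact ⟨den P, μs, hτ, Or.inl (bb_refl τ _), hc, fun i => Or.inl (bb_refl τ _)⟩
  · rintro μ ν α μ' (hbb | ⟨rfl, rfl⟩ | ⟨rfl, rfl⟩) hd
    · obtain ⟨ν', ν'', hw, ho, h₁, h₂⟩ := htr μ ν α μ' hbb hd
      exact ⟨ν', ν'', hw, ho, Or.inl h₁, Or.inl h₂⟩
    · obtain ⟨ζ, ho, hζ⟩ := h.exists_optStep hd
      exact ⟨den P, ζ, .refl, ho, Or.inr (Or.inl ⟨rfl, rfl⟩), Or.inl hζ⟩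
    · exact ⟨den P, μ', hτ, Or.inl hd, Or.inl (bb_refl τ _), Or.inl (bb_refl τ _)⟩

theorem bb_dirac_plus_pre_tau (h : sq τ E P) :
    bb τ (Distr.dirac (.plus E (.pre τ P))) (den P) :=
  ⟨_, isBranchingBisim_addPair h, Or.inr (Or.inl ⟨rfl, rfl⟩)⟩

end AxiomBP

section Rooted

variable {P₁ P₂ : PP Act}

theorem bb_den_pchoice {r : ℝ} (h0 : 0 < r) (h1 : r < 1) (Q : PP Act)
    (h : bb τ (den P₁) (den P₂)) :
    bb τ (den (.pchoice P₁ r h0 h1 Q)) (den (.pchoice P₂ r h0 h1 Q)) :=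
  convexClosed_bb τ (isCombo_mix _ _ _ _ _) (isCombo_mix _ _ _ _ _) fun b _ => by
    cases b
    exacts [bb_refl τ _, h]

theorem rbb_dirac_pre (α : Act) (h : bb τ (den P₁) (den P₂)) :
    rbb τ (Distr.dirac (.pre α P₁)) (Distr.dirac (.pre α P₂)) := by
  refine ⟨addPair Eq (Distr.dirac (.pre α P₁)) (Distr.dirac (.pre α P₂)),
    ⟨addPair_symm (fun _ _ => Eq.symm) _ _, ?_, ?_⟩, Or.inr (Or.inl ⟨rfl, rfl⟩)⟩
  · rintro I _ p μs μ ν (rfl | ⟨rfl, rfl⟩ | ⟨rfl, rfl⟩) hc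
    · exact ⟨μs, hc, fun _ => Or.inl rfl⟩
    · exact hc.exists_rel_of_dirac (fun _ => Or.inl rfl) (Or.inr (Or.inl ⟨rfl, rfl⟩))
    · exact hc.exists_rel_of_dirac (fun _ => Or.inl rfl) (Or.inr (Or.inr ⟨rfl, rfl⟩))
  · rintro μ ν β μ' (rfl | ⟨rfl, rfl⟩ | ⟨rfl, rfl⟩) hd
    · exact ⟨μ', hd, bb_refl τ μ'⟩
    · obtain ⟨rfl, rfl⟩ := dstep_dirac_pre hd
      exact ⟨den P₂, dstep_of_pstep (pstep.pre _ _), h⟩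
    · obtain ⟨rfl, rfl⟩ := dstep_dirac_pre hd
      exact ⟨den P₁, dstep_of_pstep (pstep.pre _ _), (isBranchingBisim_bb τ).1 h⟩

end Rooted

/-- Soundness of axiom BP: if `E ⊑ P` then `∂(E + τ.P) ≈_b P`, and consequently
`α.(∂(E + τ.P) ⊕_r Q) ≈_rb α.(P ⊕_r Q)`. -/
theorem statement15 {Act : Type} (τ : Act) (E : PE Act) (P : PP Act)
    (h : sq τ E P) :
    bb τ (Distr.dirac (.plus E (.pre τ P))) (den P) ∧
    ∀ (α : Act) (Q : PP Act) (r : ℝ) (h0 : 0 < r) (h1 : r < 1),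
      rbb τ (Distr.dirac (.pre α (.pchoice (.dirac (.plus E (.pre τ P))) r h0 h1 Q)))
            (Distr.dirac (.pre α (.pchoice P r h0 h1 Q))) := by
  have hBP := bb_dirac_plus_pre_tau h
  exact ⟨hBP, fun α Q r h0 h1 => rbb_dirac_pre τ α (bb_den_pchoice τ h0 h1 Q hBP)⟩

end PBB
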